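/- Let r ∈ ℝ, 1 < α ≤ 2 with conjugate α', 0 < q < ∞, and r + 1 - 1/α < ρ ≤ 1. Then for any sequence (f̂(ξ)) ∈ ℓ^α(ℤ) and σ : ℤ → ℂ with |σ(ξ)| ≤ C|ξ|^{-ρ} (ξ ≠ 0), |σ(0)| ≤ C: (∑_{m=0}^{∞} 2^{mrq} (∑_{2^m ≤ |ξ| < 2^{m+1}} |σ(ξ)f̂(ξ)|)^q)^{1/q} ≤ C' · (∑_{m=0}^{∞} 2^{mq(r - ρ + 1/α')})^{1/q} · (∑_ξ |f̂(ξ)|^α)^{1/α}, and the series ∑_m 2^{mq(r-ρ+1/α')} converges. -/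

import Mathlib

/-!
On the dyadic block `2^m ≤ |ξ| < 2^(m+1)` the symbol is at most a constant times `2^(-mρ)`, and by
Hölder's inequality with exponents `α, α'` the block sum of `|f̂|` is at most `‖f̂‖_α` times
`(#block)^(1/α') ≤ 2^((m+1)/α')`. Hence the `m`-th term of the Triebel–Lizorkin sum is bounded by a
constant times `‖f̂‖_α^q 2^(mq(r - ρ + 1/α'))`, a geometric series with negative exponent.
-/

noncomputable def dyadicBlock (m : ℕ) : Finset ℤ :=
  (Finset.Icc (-(2^(m+1) : ℤ)) (2^(m+1))).filter fun ξ => 2^m ≤ |ξ| ∧ |ξ| < 2^(m+1)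

open Finset Real

lemma Real.sum_le_Lp_mul_card_rpow {ι : Type*} (s : Finset ι) {f : ι → ℝ} {p q : ℝ}
    (hpq : p.HolderConjugate q) (hf : ∀ i ∈ s, 0 ≤ f i) :
    ∑ i ∈ s, f i ≤ (∑ i ∈ s, f i ^ p) ^ (1 / p) * (#s : ℝ) ^ (1 / q) := by
  simpa using inner_le_Lp_mul_Lq_of_nonneg s (g := fun _ => 1) hpq hf fun _ _ => zero_le_one

lemma Real.rpow_le_two_rpow_abs_mul_rpow {x y s : ℝ} (hx : 0 < x) (hxy : x ≤ y) (hy : y ≤ 2 * x) :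
    y ^ s ≤ 2 ^ |s| * x ^ s := by
  rcases le_or_gt 0 s with hs | hs
  · calc y ^ s ≤ (2 * x) ^ s := rpow_le_rpow (hx.le.trans hxy) hy hs
      _ = 2 ^ |s| * x ^ s := by rw [mul_rpow zero_le_two hx.le, abs_of_nonneg hs]
  · calc y ^ s ≤ x ^ s := rpow_le_rpow_of_nonpos hx hxy hs.le
      _ ≤ 2 ^ |s| * x ^ s :=
        le_mul_of_one_le_left (rpow_nonneg hx.le _) (one_le_rpow one_le_two (abs_nonneg s))

lemma summable_two_rpow_nat_mul {s : ℝ} (hs : s < 0) :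
    Summable fun m : ℕ => (2 : ℝ) ^ ((m : ℝ) * s) := by
  have hgeom : ∀ m : ℕ, (2 : ℝ) ^ ((m : ℝ) * s) = (2 ^ s) ^ m := fun m => by
    rw [mul_comm, rpow_mul zero_le_two, rpow_natCast]
  simpa only [hgeom] using
    summable_geometric_of_lt_one (by positivity) (rpow_lt_one_of_one_lt_of_neg one_lt_two hs)

lemma tsum_rpow_one_div_le_mul {ι : Type*} {u g : ι → ℝ} {A q : ℝ} (hq : 0 < q) (hA : 0 ≤ A)
    (hu : ∀ i, 0 ≤ u i) (hg : Summable g) (hg0 : ∀ i, 0 ≤ g i) (hug : ∀ i, u i ≤ A ^ q * g i) :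
    (∑' i, u i) ^ (1 / q) ≤ A * (∑' i, g i) ^ (1 / q) := by
  calc (∑' i, u i) ^ (1 / q) ≤ (∑' i, A ^ q * g i) ^ (1 / q) :=
        rpow_le_rpow (tsum_nonneg hu)
          (Summable.tsum_le_tsum hug (.of_nonneg_of_le hu hug (hg.mul_left _)) (hg.mul_left _))
          (by positivity)
    _ = A * (∑' i, g i) ^ (1 / q) := by
        rw [tsum_mul_left, mul_rpow (by positivity) (tsum_nonneg hg0), one_div,
          rpow_rpow_inv hA hq.ne']

lemma mem_dyadicBlock {m : ℕ} {ξ : ℤ} : ξ ∈ dyadicBlock m ↔ 2 ^ m ≤ |ξ| ∧ |ξ| < 2 ^ (m + 1) := by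
  simp only [dyadicBlock, mem_filter, mem_Icc, and_iff_right_iff_imp]
  intro ⟨_, h⟩
  exact ⟨by linarith [neg_abs_le ξ], (le_abs_self ξ).trans h.le⟩

lemma card_dyadicBlock_le (m : ℕ) : #(dyadicBlock m) ≤ 2 ^ (m + 1) := by
  have hsub : dyadicBlock m ⊆ Ico (2 ^ m : ℤ) (2 ^ (m + 1)) ∪ Ioc (-2 ^ (m + 1)) (-2 ^ m) := by
    intro ξ hξ
    rw [mem_dyadicBlock] at hξ
    simp only [mem_union, mem_Ico, mem_Ioc]
    cases abs_cases ξ <;> omega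
  calc #(dyadicBlock m) ≤ #(Ico (2 ^ m : ℤ) (2 ^ (m + 1))) + #(Ioc (-2 ^ (m + 1) : ℤ) (-2 ^ m)) :=
        (card_le_card hsub).trans (card_union_le _ _)
    _ = 2 ^ (m + 1) := by
        have hlen : (2 : ℤ) ^ (m + 1) - 2 ^ m = ((2 ^ m : ℕ) : ℤ) := by push_cast; ring
        rw [Int.card_Ico, Int.card_Ioc, neg_sub_neg, hlen, Int.toNat_natCast, pow_succ]
        ring

lemma abs_cast_mem_Icc_of_mem_dyadicBlock {m : ℕ} {ξ : ℤ} (hξ : ξ ∈ dyadicBlock m) :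
    (2 : ℝ) ^ m ≤ |(ξ : ℝ)| ∧ |(ξ : ℝ)| ≤ 2 * 2 ^ m := by
  rw [mem_dyadicBlock] at hξ
  rw [← Int.cast_abs, ← pow_succ']
  exact ⟨by exact_mod_cast hξ.1, by exact_mod_cast hξ.2.le⟩

section SymbolEstimates

variable {E : Type*} [SeminormedAddGroup E] {σ : ℤ → E} {C ρ : ℝ}

lemma nonneg_of_norm_le_mul_abs_rpow (hσ : ∀ ξ : ℤ, ξ ≠ 0 → ‖σ ξ‖ ≤ C * |(ξ : ℝ)| ^ (-ρ)) :
    0 ≤ C := by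
  simpa using (norm_nonneg _).trans (hσ 1 one_ne_zero)

lemma norm_le_of_mem_dyadicBlock (hσ : ∀ ξ : ℤ, ξ ≠ 0 → ‖σ ξ‖ ≤ C * |(ξ : ℝ)| ^ (-ρ))
    {m : ℕ} {ξ : ℤ} (hξ : ξ ∈ dyadicBlock m) :
    ‖σ ξ‖ ≤ 2 ^ |ρ| * C * 2 ^ ((m : ℝ) * -ρ) := by
  obtain ⟨hlo, hhi⟩ := abs_cast_mem_Icc_of_mem_dyadicBlock hξ
  have hξ0 : ξ ≠ 0 := by
    rintro rfl
    rw [mem_dyadicBlock, abs_zero] at hξ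
    exact not_le.2 (by positivity) hξ.1
  have hC := nonneg_of_norm_le_mul_abs_rpow hσ
  calc ‖σ ξ‖ ≤ C * |(ξ : ℝ)| ^ (-ρ) := hσ ξ hξ0
    _ ≤ C * (2 ^ |-ρ| * ((2 : ℝ) ^ m) ^ (-ρ)) := by
        gcongr
        exact rpow_le_two_rpow_abs_mul_rpow (by positivity) hlo hhi
    _ = 2 ^ |ρ| * C * 2 ^ ((m : ℝ) * -ρ) := by
        rw [abs_neg, ← rpow_natCast, ← rpow_mul zero_le_two]
        ring

end SymbolEstimates

lemma sum_dyadicBlock_norm_mul_le {R : Type*} [NonUnitalSeminormedRing R] {σ a : ℤ → R}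
    {C ρ α α' : ℝ} (hσ : ∀ ξ : ℤ, ξ ≠ 0 → ‖σ ξ‖ ≤ C * |(ξ : ℝ)| ^ (-ρ))
    (hαα' : α.HolderConjugate α') (ha : Summable fun ξ => ‖a ξ‖ ^ α) (m : ℕ) :
    ∑ ξ ∈ dyadicBlock m, ‖σ ξ * a ξ‖ ≤
      2 ^ |ρ| * C * 2 ^ (1 / α') * (∑' ξ, ‖a ξ‖ ^ α) ^ (1 / α) * 2 ^ ((m : ℝ) * (1 / α' - ρ)) := by
  have hC := nonneg_of_norm_le_mul_abs_rpow hσ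
  have hsymbol : ∑ ξ ∈ dyadicBlock m, ‖σ ξ * a ξ‖ ≤
      2 ^ |ρ| * C * 2 ^ ((m : ℝ) * -ρ) * ∑ ξ ∈ dyadicBlock m, ‖a ξ‖ := by
    rw [mul_sum]
    refine sum_le_sum fun ξ hξ => (norm_mul_le _ _).trans ?_
    gcongr
    exact norm_le_of_mem_dyadicBlock hσ hξ
  have hholder : ∑ ξ ∈ dyadicBlock m, ‖a ξ‖ ≤
      (∑' ξ, ‖a ξ‖ ^ α) ^ (1 / α) * 2 ^ (((m : ℝ) + 1) / α') := by
    refine (sum_le_Lp_mul_card_rpow _ hαα' fun _ _ => norm_nonneg _).trans ?_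
    have hα : 0 ≤ 1 / α := one_div_nonneg.2 hαα'.nonneg
    have hα' : 0 ≤ 1 / α' := one_div_nonneg.2 hαα'.symm.nonneg
    gcongr
    · exact ha.sum_le_tsum _ fun _ _ => by positivity
    · calc (#(dyadicBlock m) : ℝ) ^ (1 / α') ≤ ((2 : ℝ) ^ (m + 1)) ^ (1 / α') := by
            gcongr
            exact_mod_cast card_dyadicBlock_le m
        _ = 2 ^ (((m : ℝ) + 1) / α') := by
            rw [← rpow_natCast, ← rpow_mul zero_le_two]
            push_cast
            ring_nf
  calc ∑ ξ ∈ dyadicBlock m, ‖σ ξ * a ξ‖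
      ≤ 2 ^ |ρ| * C * 2 ^ ((m : ℝ) * -ρ) *
          ((∑' ξ, ‖a ξ‖ ^ α) ^ (1 / α) * 2 ^ (((m : ℝ) + 1) / α')) :=
        hsymbol.trans (by gcongr)
    _ = _ := by
        rw [show ((m : ℝ) + 1) / α' = m * (1 / α') + 1 / α' by ring,
          show (m : ℝ) * (1 / α' - ρ) = m * (1 / α') + m * -ρ by ring,
          rpow_add two_pos, rpow_add two_pos]
        ring

theorem triebel_core_estimate_general (r α α' q ρ C : ℝ)
    (hα0 : 1 < α) (hconj : 1/α + 1/α' = 1)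
    (hq0 : 0 < q) (hρ : r + 1 - 1/α < ρ)
    (σ : ℤ → ℂ) (hσ : ∀ ξ : ℤ, ξ ≠ 0 → ‖σ ξ‖ ≤ C * |(ξ:ℝ)| ^ (-ρ)) :
    Summable (fun m : ℕ => (2:ℝ) ^ ((m:ℝ) * q * (r - ρ + 1/α'))) ∧
    ∃ C' : ℝ, ∀ a : ℤ → ℂ, Summable (fun ξ : ℤ => ‖a ξ‖ ^ α) →
      (∑' m : ℕ, (2:ℝ) ^ ((m:ℝ) * r * q) *
          (∑ ξ ∈ dyadicBlock m, ‖σ ξ * a ξ‖) ^ q) ^ (1/q)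
        ≤ C' * (∑' m : ℕ, (2:ℝ) ^ ((m:ℝ) * q * (r - ρ + 1/α'))) ^ (1/q) *
            (∑' ξ : ℤ, ‖a ξ‖ ^ α) ^ (1/α) := by
  have hαα' : α.HolderConjugate α' :=
    holderConjugate_iff.2 ⟨hα0, by simpa only [one_div] using hconj⟩
  have hS : Summable fun m : ℕ => (2 : ℝ) ^ ((m : ℝ) * q * (r - ρ + 1 / α')) := by
    simpa only [mul_assoc] using summable_two_rpow_nat_mul (mul_neg_of_pos_of_neg hq0 (by linarith))
  refine ⟨hS, 2 ^ |ρ| * C * 2 ^ (1 / α'), fun a ha => ?_⟩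
  have hC := nonneg_of_norm_le_mul_abs_rpow hσ
  refine (tsum_rpow_one_div_le_mul (A := 2 ^ |ρ| * C * 2 ^ (1 / α') * (∑' ξ, ‖a ξ‖ ^ α) ^ (1 / α))
    hq0 (by positivity) (fun m => by positivity) hS
    (fun m => by positivity) fun m => ?_).trans_eq (by ring)
  calc (2 : ℝ) ^ ((m : ℝ) * r * q) * (∑ ξ ∈ dyadicBlock m, ‖σ ξ * a ξ‖) ^ q
      ≤ 2 ^ ((m : ℝ) * r * q) * (2 ^ |ρ| * C * 2 ^ (1 / α') * (∑' ξ, ‖a ξ‖ ^ α) ^ (1 / α) *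
          2 ^ ((m : ℝ) * (1 / α' - ρ))) ^ q := by
        gcongr
        exact sum_dyadicBlock_norm_mul_le hσ hαα' ha m
    _ = _ := by
        rw [mul_rpow (by positivity) (by positivity), ← rpow_mul zero_le_two, mul_left_comm,
          ← rpow_add two_pos]
        congr 2
        ring

theorem triebel_core_estimate (r α α' q ρ C : ℝ)
    (hα0 : 1 < α) (hα1 : α ≤ 2) (hconj : 1/α + 1/α' = 1)
    (hq0 : 0 < q) (hρ : r + 1 - 1/α < ρ) (hρ1 : ρ ≤ 1)
    (σ : ℤ → ℂ) (hσ : ∀ ξ : ℤ, ξ ≠ 0 → ‖σ ξ‖ ≤ C * |(ξ:ℝ)| ^ (-ρ))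
    (hσ0 : ‖σ 0‖ ≤ C) :
    Summable (fun m : ℕ => (2:ℝ) ^ ((m:ℝ) * q * (r - ρ + 1/α'))) ∧
    ∃ C' : ℝ, ∀ a : ℤ → ℂ, Summable (fun ξ : ℤ => ‖a ξ‖ ^ α) →
      (∑' m : ℕ, (2:ℝ) ^ ((m:ℝ) * r * q) *
          (∑ ξ ∈ dyadicBlock m, ‖σ ξ * a ξ‖) ^ q) ^ (1/q)
        ≤ C' * (∑' m : ℕ, (2:ℝ) ^ ((m:ℝ) * q * (r - ρ + 1/α'))) ^ (1/q) *
            (∑' ξ : ℤ, ‖a ξ‖ ^ α) ^ (1/α) :=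
  triebel_core_estimate_general r α α' q ρ C hα0 hconj hq0 hρ σ hσ
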